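/- The master can recover the global gradient: with notation as in the layered scheme, for each layer $\ell$ and each $s$-subset $S$ in the image of $\phi$, the $\nu$ helpers in $\mathcal{H}_\ell \setminus S$ provide $\nu$ coordinates of the codeword $(\sum_{i \in \phi^{-1}(S)} \underline{g}^{(\ell)}_i)\mathbf{G}$, from which $\sum_{i \in \phi^{-1}(S)} \underline{g}^{(\ell)}_i$ is uniquely determined; summing over all $S$ in the image of $\phi$ yields $\sum_{i=1}^{n_e} \underline{g}^{(\ell)}_i$ since the classes partition $[n_e]$. -/
import Mathlib


/-- Master recovery in the layered scheme (for a layer with its `ν+s` helpers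
identified with `Fin (ν+s)`): for each `s`-subset `S` in the image of `φ`, the
aggregated coordinates transmitted by the `ν` helpers outside `S` determine the
partial sum `∑_{i ∈ φ⁻¹(S)} g i` uniquely, and summing the partial sums over
the image of `φ` recovers the total gradient `∑ i, g i`. -/
theorem master_recovery (n_e ν s d : ℕ) (F : Type*) [Field F]
    (G : Matrix (Fin ν) (Fin (ν + s)) F)
    (hMDS : ∀ T : Finset (Fin (ν + s)), T.card = ν →
      LinearIndependent F (fun j : T => fun i => G i j))
    (ℰ : Fin n_e → Finset (Fin (ν + s)))
    (φ : Fin n_e → Finset (Fin (ν + s)))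
    (hφcard : ∀ i, (φ i).card = s)
    (hφmem : ∀ i, ℰ i ⊆ φ i)
    (hφconst : ∀ a b, ℰ a = ℰ b → φ a = φ b)
    (g : Fin n_e → Fin ν → (Fin d → F)) :
    (∀ S ∈ Finset.univ.image φ, ∀ w : Fin ν → (Fin d → F),
        (∀ j ∈ (Finset.univ : Finset (Fin (ν + s))) \ S,
          (∑ t, G t j • w t)
            = ∑ i ∈ Finset.univ.filter (fun i => φ i = S),
                ∑ t, G t j • g i t) →
        w = fun t => ∑ i ∈ Finset.univ.filter (fun i => φ i = S), g i t) ∧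
    (∑ S ∈ Finset.univ.image φ,
        ∑ i ∈ Finset.univ.filter (fun i => φ i = S), (fun t => g i t))
      = ∑ i, (fun t => g i t) := by
  constructor
  · intro S hS w hw
    obtain ⟨i₀, _, hi₀⟩ := Finset.mem_image.mp hS
    have hScard : S.card = s := by rw [← hi₀]; exact hφcard i₀
    set T : Finset (Fin (ν + s)) := Finset.univ \ S with hT
    have hTcard : T.card = ν := by
      rw [hT, Finset.card_sdiff_of_subset (Finset.subset_univ S), Finset.card_univ,
        Fintype.card_fin, hScard]
      omega
    have hcardT : Fintype.card T = ν := by simpa using hTcard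
    let e : Fin ν ≃ T := (Fintype.equivFinOfCardEq hcardT).symm
    set M : Matrix (Fin ν) (Fin ν) F := fun a t => G t (e a) with hM
    have hli : LinearIndependent F (fun a : Fin ν => M a) := by
      have := hMDS T hTcard
      exact this.comp e e.injective
    have hUnit : IsUnit M := Matrix.linearIndependent_rows_iff_isUnit.mp hli
    have hinj : Function.Injective M.mulVec :=
      Matrix.mulVec_injective_iff_isUnit.mpr hUnit
    set u : Fin ν → Fin d → F :=
      fun t => ∑ i ∈ Finset.univ.filter (fun i => φ i = S), g i t with hu
    funext t k
    have key : (fun t => w t k) = fun t => u t k := by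
      apply hinj
      funext a
      have hje : (e a : Fin (ν + s)) ∈ Finset.univ \ S := (e a).2
      have h1 := hw _ hje
      have h2 := congrFun h1 k
      simp only [Finset.sum_apply, Pi.smul_apply, smul_eq_mul] at h2
      simp only [Matrix.mulVec, dotProduct, hM]
      rw [h2, Finset.sum_comm]
      congr 1
      funext t
      simp [hu, Finset.mul_sum]
    exact congrFun key t
  · rw [Finset.sum_fiberwise_of_maps_to (fun i _ => Finset.mem_image_of_mem φ
      (Finset.mem_univ i))]
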